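/- Let n = q^{g+1} with q ≥ 3 and g ≥ 3 (so n ≥ q^4). There exists a graph on n vertices consisting of a Hamiltonian path g_1 — g_2 — ... — g_n together with n/q hyperedges, each joining q vertices, such that every vertex is incident to exactly one hyperedge, and the shortest cycle in the resulting hypergraph (where a cycle is a closed walk not repeating the same edge/hyperedge in two consecutive steps, and in particular not moving between two vertices of the same hyperedge twice in a row) has length at least g. -/

import Mathlib

/-! Start from any partition of the line into blocks of size `q` and raise the girth one step at a
time, as Erdős and Sachs do for regular graphs. Among partitions of girth at least `γ`, take one
with the fewest cycles of length `γ`. If it has such a cycle, pick a hyperedge step `x → y` on it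
and a vertex `z` whose block is at distance more than `g - 2` from the block of `y`;
non-backtracking walks branch at most `q`-fold, so the blocks that close cover only about `2 q^g` of
the `n = q^{g+1}` vertices. Swapping `y` and `z` destroys the cycle and creates no new cycle of
length at most `γ`. Indeed, such a cycle must use a hyperedge through `y` or `z`, and between two
consecutive such steps it runs along an old path; by the distance condition this path returns to the
block it started from, so it closes an old cycle and has length at least `γ`. Two such stretches do
not fit into the cycle, and a single one returns to the wrong block. -/

/-- Hamiltonian path adjacency on the line `g_0 — g_1 — ⋯ — g_{n-1}`. -/
def HamAdj {n : ℕ} (a b : Fin n) : Prop := a.val + 1 = b.val ∨ b.val + 1 = a.val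

/-- Two distinct vertices joined by a hyperedge of `A`. -/
def HyperAdj {n : ℕ} (A : Finset (Finset (Fin n))) (a b : Fin n) : Prop :=
  a ≠ b ∧ ∃ e ∈ A, a ∈ e ∧ b ∈ e

/-- A cycle of length L in the hypergraph: a closed walk `w` with step types `t`
(`true` = Hamiltonian edge, `false` = hyperedge) which never uses the same edge or
hyperedge in two consecutive steps; since the hyperedges form a matching, two
consecutive hyperedge steps would necessarily use the same hyperedge (a U-turn
or a roundabout), so they are forbidden, and a Hamiltonian U-turn is forbidden. -/
def IsCycleWalk {n : ℕ} (A : Finset (Finset (Fin n))) (L : ℕ)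
    (w : ZMod L → Fin n) (t : ZMod L → Bool) : Prop :=
  0 < L
  ∧ (∀ i : ZMod L, (t i = true → HamAdj (w i) (w (i + 1)))
      ∧ (t i = false → HyperAdj A (w i) (w (i + 1))))
  ∧ (∀ i : ZMod L, ¬(t i = false ∧ t (i + 1) = false))
  ∧ (∀ i : ZMod L, ¬(t i = true ∧ t (i + 1) = true ∧ w (i + 2) = w i))

namespace Interleaver

open Finset

variable {n N q : ℕ}

def FiberAdj (f : Fin n → Fin N) (a b : Fin n) : Prop := a ≠ b ∧ f a = f b

def IsFiberCycle (f : Fin n → Fin N) (L : ℕ) (w : ZMod L → Fin n) (t : ZMod L → Bool) : Prop :=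
  0 < L
  ∧ (∀ i : ZMod L, (t i = true → HamAdj (w i) (w (i + 1)))
      ∧ (t i = false → FiberAdj f (w i) (w (i + 1))))
  ∧ (∀ i : ZMod L, ¬(t i = false ∧ t (i + 1) = false))
  ∧ (∀ i : ZMod L, ¬(t i = true ∧ t (i + 1) = true ∧ w (i + 2) = w i))

def GirthAtLeast (f : Fin n → Fin N) (γ : ℕ) : Prop :=
  ∀ L w t, IsFiberCycle f L w t → γ ≤ L

def fiber (f : Fin n → Fin N) (j : Fin N) : Finset (Fin n) := {v | f v = j}

def fiberEdges (f : Fin n → Fin N) : Finset (Finset (Fin n)) := univ.image (fiber f)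

def IsUniform (q : ℕ) (f : Fin n → Fin N) : Prop := ∀ j, #(fiber f j) = q

@[simp]
lemma mem_fiber {f : Fin n → Fin N} {j : Fin N} {v : Fin n} : v ∈ fiber f j ↔ f v = j := by
  simp [fiber]

lemma hyperAdj_fiberEdges_iff (f : Fin n → Fin N) (a b : Fin n) :
    HyperAdj (fiberEdges f) a b ↔ FiberAdj f a b := by
  simp only [HyperAdj, FiberAdj, fiberEdges, exists_mem_image, mem_univ, true_and, mem_fiber]
  constructor
  · rintro ⟨hab, j, rfl, hb⟩
    exact ⟨hab, hb.symm⟩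
  · rintro ⟨hab, hf⟩
    exact ⟨hab, f a, rfl, hf.symm⟩

lemma isCycleWalk_fiberEdges_iff (f : Fin n → Fin N) (L : ℕ) (w : ZMod L → Fin n)
    (t : ZMod L → Bool) : IsCycleWalk (fiberEdges f) L w t ↔ IsFiberCycle f L w t := by
  simp only [IsCycleWalk, IsFiberCycle, hyperAdj_fiberEdges_iff]

lemma card_of_mem_fiberEdges {f : Fin n → Fin N} (hf : IsUniform q f) {e : Finset (Fin n)}
    (he : e ∈ fiberEdges f) : #e = q := by
  obtain ⟨j, -, rfl⟩ := mem_image.1 he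
  exact hf j

lemma existsUnique_mem_fiberEdges (f : Fin n → Fin N) (v : Fin n) :
    ∃! e, e ∈ fiberEdges f ∧ v ∈ e := by
  refine ⟨fiber f (f v), ⟨mem_image_of_mem _ (mem_univ _), mem_fiber.2 rfl⟩, ?_⟩
  rintro e ⟨he, hv⟩
  obtain ⟨j, -, rfl⟩ := mem_image.1 he
  rw [mem_fiber.1 hv]

lemma card_fiberEdges {f : Fin n → Fin N} (hf : IsUniform q f) (hq : 0 < q) :
    #(fiberEdges f) = N := by
  rw [fiberEdges, card_image_of_injective _ ?_, card_univ, Fintype.card_fin]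
  intro a b hab
  obtain ⟨v, hv⟩ := card_pos.1 ((hf a).symm ▸ hq : 0 < #(fiber f a))
  rw [← mem_fiber.1 hv, ← mem_fiber.1 (hab ▸ hv : v ∈ fiber f b)]

lemma exists_isUniform (h : n = q * N) : ∃ f : Fin n → Fin N, IsUniform q f := by
  let e : Fin n ≃ Fin q × Fin N := (finCongr h).trans finProdFinEquiv.symm
  refine ⟨fun v => (e v).2, fun j => ?_⟩
  have himage : (fiber (fun v => (e v).2) j).map e.toEmbedding = univ ×ˢ {j} := by
    ext ⟨a, b⟩
    simp [eq_comm]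
  rw [← card_map e.toEmbedding, himage, card_product, card_univ, Fintype.card_fin,
    card_singleton, mul_one]

lemma FiberAdj.symm {f : Fin n → Fin N} {a b : Fin n} (h : FiberAdj f a b) : FiberAdj f b a :=
  ⟨h.1.symm, h.2.symm⟩

structure IsFiberPath (f : Fin n → Fin N) (ℓ : ℕ) (p : ℕ → Fin n) (s : ℕ → Bool) : Prop where
  step : ∀ j < ℓ, (s j = true → HamAdj (p j) (p (j + 1)))
    ∧ (s j = false → FiberAdj f (p j) (p (j + 1)))
  no_hyper_hyper : ∀ j, j + 1 < ℓ → ¬(s j = false ∧ s (j + 1) = false)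
  no_uturn : ∀ j, j + 2 ≤ ℓ → ¬(s j = true ∧ s (j + 1) = true ∧ p (j + 2) = p j)

namespace IsFiberPath

variable {f : Fin n → Fin N} {ℓ : ℕ} {p : ℕ → Fin n} {s : ℕ → Bool}

lemma mono_length (hp : IsFiberPath f ℓ p s) {ℓ' : ℕ} (h : ℓ' ≤ ℓ) : IsFiberPath f ℓ' p s :=
  ⟨fun j hj => hp.step j (by omega), fun j hj => hp.no_hyper_hyper j (by omega),
    fun j hj => hp.no_uturn j (by omega)⟩

lemma drop (k : ℕ) (hp : IsFiberPath f (k + ℓ) p s) :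
    IsFiberPath f ℓ (fun j => p (k + j)) (fun j => s (k + j)) :=
  ⟨fun j hj => hp.step (k + j) (by omega), fun j hj => hp.no_hyper_hyper (k + j) (by omega),
    fun j hj => hp.no_uturn (k + j) (by omega)⟩

lemma inner (hp : IsFiberPath f ℓ p s) :
    IsFiberPath f (ℓ - 2) (fun j => p (1 + j)) (fun j => s (1 + j)) :=
  ⟨fun j hj => hp.step (1 + j) (by omega), fun j hj => hp.no_hyper_hyper (1 + j) (by omega),
    fun j hj => hp.no_uturn (1 + j) (by omega)⟩

lemma reverse (hp : IsFiberPath f ℓ p s) :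
    IsFiberPath f ℓ (fun j => p (ℓ - j)) (fun j => s (ℓ - 1 - j)) := by
  refine ⟨fun j hj => ?_, fun j hj => ?_, fun j hj => ?_⟩
  · obtain ⟨hham, hhyp⟩ := hp.step (ℓ - 1 - j) (by omega)
    rw [show ℓ - 1 - j + 1 = ℓ - j by omega, show ℓ - (j + 1) = ℓ - 1 - j by omega] at *
    exact ⟨fun h => (hham h).symm, fun h => (hhyp h).symm⟩
  · have := hp.no_hyper_hyper (ℓ - 2 - j) (by omega)
    rw [show ℓ - 1 - (j + 1) = ℓ - 2 - j by omega, show ℓ - 1 - j = ℓ - 2 - j + 1 by omega]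
    tauto
  · have := hp.no_uturn (ℓ - 2 - j) (by omega)
    rw [show ℓ - 1 - (j + 1) = ℓ - 2 - j by omega, show ℓ - 1 - j = ℓ - 2 - j + 1 by omega,
      show ℓ - (j + 2) = ℓ - 2 - j by omega, show ℓ - j = ℓ - 2 - j + 2 by omega]
    exact fun ⟨h₁, h₂, h₃⟩ => this ⟨h₂, h₁, h₃.symm⟩

end IsFiberPath

lemma exists_isFiberCycle_of_mod (f : Fin n → Fin N) {m : ℕ} (hm : 0 < m) (p : ℕ → Fin n)
    (s : ℕ → Bool)
    (hstep : ∀ r < m, (s r = true → HamAdj (p r) (p ((r + 1) % m)))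
      ∧ (s r = false → FiberAdj f (p r) (p ((r + 1) % m))))
    (hhyper : ∀ r < m, ¬(s r = false ∧ s ((r + 1) % m) = false))
    (huturn : ∀ r < m, ¬(s r = true ∧ s ((r + 1) % m) = true ∧ p ((r + 2) % m) = p r)) :
    ∃ w t, IsFiberCycle f m w t := by
  have : NeZero m := ⟨hm.ne'⟩
  have hsucc (i : ZMod m) : (i + 1).val = (i.val + 1) % m := by
    rw [ZMod.val_add, ZMod.val_one_eq_one_mod, Nat.add_mod_mod]
  have hsucc₂ (i : ZMod m) : (i + 2).val = (i.val + 2) % m := by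
    rw [ZMod.val_add, ZMod.val_ofNat, Nat.add_mod_mod]
  refine ⟨fun i => p i.val, fun i => s i.val, hm, fun i => ?_, fun i => ?_, fun i => ?_⟩
  · simpa only [hsucc] using hstep i.val (ZMod.val_lt i)
  · simpa only [hsucc] using hhyper i.val (ZMod.val_lt i)
  · simpa only [hsucc, hsucc₂] using huturn i.val (ZMod.val_lt i)

namespace IsFiberPath

variable {f : Fin n → Fin N} {ℓ : ℕ} {p : ℕ → Fin n} {s : ℕ → Bool}

lemma exists_isFiberCycle_of_closed (hp : IsFiberPath f ℓ p s) (hℓ : 1 ≤ ℓ)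
    (hclosed : p ℓ = p 0) (hhyper : ¬(s (ℓ - 1) = false ∧ s 0 = false))
    (huturn : ¬(s (ℓ - 1) = true ∧ s 0 = true ∧ p 1 = p (ℓ - 1))) :
    ∃ w t, IsFiberCycle f ℓ w t := by
  apply exists_isFiberCycle_of_mod f hℓ p s
  · intro r hr
    rcases (by omega : r + 1 < ℓ ∨ r + 1 = ℓ) with h | h
    · rw [Nat.mod_eq_of_lt h]; exact hp.step r hr
    · rw [h, Nat.mod_self, ← hclosed, ← h]; exact hp.step r hr
  · intro r hr
    rcases (by omega : r + 1 < ℓ ∨ r + 1 = ℓ) with h | h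
    · rw [Nat.mod_eq_of_lt h]; exact hp.no_hyper_hyper r h
    · rwa [h, Nat.mod_self, show r = ℓ - 1 by omega]
  · intro r hr
    rcases (by omega : r + 2 < ℓ ∨ r + 2 = ℓ ∨ r + 1 = ℓ) with h | h | h
    · rw [Nat.mod_eq_of_lt (by omega), Nat.mod_eq_of_lt h]; exact hp.no_uturn r (by omega)
    · rw [Nat.mod_eq_of_lt (by omega), h, Nat.mod_self, ← hclosed, ← h]
      exact hp.no_uturn r h.le
    · have hwrap : p ((r + 2) % ℓ) = p 1 := by
        rcases (by omega : ℓ = 1 ∨ 2 ≤ ℓ) with h1 | h2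
        · subst h1; rw [Nat.mod_one, ← hclosed]
        · rw [show r + 2 = 1 + ℓ by omega, Nat.add_mod_right, Nat.mod_eq_of_lt h2]
      rwa [h, Nat.mod_self, hwrap, show r = ℓ - 1 by omega]

lemma exists_isFiberCycle_of_fiberAdj (hp : IsFiberPath f ℓ p s) (hℓ : 1 ≤ ℓ)
    (hfirst : s 0 = true) (hlast : s (ℓ - 1) = true) (hadj : FiberAdj f (p ℓ) (p 0)) :
    ∃ w t, IsFiberCycle f (ℓ + 1) w t := by
  set p' : ℕ → Fin n := fun j => p (j % (ℓ + 1))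
  have hp' : ∀ j ≤ ℓ, p' j = p j := fun j hj => by
    simp only [p', Nat.mod_eq_of_lt (by omega : j < ℓ + 1)]
  set s' : ℕ → Bool := Function.update s ℓ false
  have hs' : ∀ j < ℓ, s' j = s j := fun j hj => Function.update_of_ne (by omega) _ _
  have hpath : IsFiberPath f (ℓ + 1) p' s' := by
    refine ⟨fun j hj => ?_, fun j hj => ?_, fun j hj => ?_⟩
    · rcases (by omega : j < ℓ ∨ j = ℓ) with h | rfl
      · rw [hs' j h, hp' j h.le, hp' (j + 1) h]; exact hp.step j h
      · simp only [s', p', Function.update_self, Nat.mod_self,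
          Nat.mod_eq_of_lt (Nat.lt_succ_self j)]
        exact ⟨nofun, fun _ => hadj⟩
    · rcases (by omega : j + 1 < ℓ ∨ j + 1 = ℓ) with h | h
      · rw [hs' j (by omega), hs' (j + 1) h]; exact hp.no_hyper_hyper j h
      · rw [hs' j (by omega), show j = ℓ - 1 by omega, hlast]; exact fun h' => nomatch h'.1
    · rcases (by omega : j + 2 ≤ ℓ ∨ j + 1 = ℓ) with h | h
      · rw [hs' j (by omega), hs' (j + 1) (by omega), hp' j (by omega), hp' (j + 2) h]
        exact hp.no_uturn j h
      · simp only [s', h, Function.update_self]; exact fun h' => nomatch h'.2.1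
  have hfirst' : s' 0 = true := (hs' 0 hℓ).trans hfirst
  have hlast' : s' (ℓ + 1 - 1) = false := by simp [s']
  refine hpath.exists_isFiberCycle_of_closed (by omega) ?_ ?_ ?_
  · simp only [p', Nat.mod_self, Nat.zero_mod]
  · rw [hfirst']; exact fun h' => nomatch h'.2
  · rw [hlast']; exact fun h' => nomatch h'.1

lemma exists_isFiberCycle_le_of_closed (hp : IsFiberPath f ℓ p s) (hℓ : 1 ≤ ℓ)
    (hclosed : p ℓ = p 0) (hends : s (ℓ - 1) = s 0) :
    ∃ m, 1 ≤ m ∧ m ≤ ℓ ∧ ∃ w t, IsFiberCycle f m w t := by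
  induction ℓ using Nat.strong_induction_on generalizing p s with
  | _ ℓ ih =>
  rcases (by omega : ℓ = 1 ∨ ℓ = 2 ∨ 3 ≤ ℓ) with rfl | rfl | hℓ3
  · exfalso
    obtain ⟨hham, hhyp⟩ := hp.step 0 one_pos
    rw [zero_add, hclosed] at hham hhyp
    cases h : s 0
    · exact (hhyp h).1 rfl
    · rcases hham h with h' | h' <;> omega
  · exfalso
    cases h : s 0
    · exact hp.no_hyper_hyper 0 (by omega) ⟨h, hends.trans h⟩
    · exact hp.no_uturn 0 le_rfl ⟨h, hends.trans h, hclosed⟩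
  have hin := hp.inner
  have hin_end : 1 + (ℓ - 2) = ℓ - 1 := by omega
  have hin_last : 1 + (ℓ - 2 - 1) = ℓ - 2 := by omega
  by_cases hrec : p 1 = p (ℓ - 1) ∧ s 1 = s (ℓ - 2)
  · obtain ⟨m, hm₁, hm, hcyc⟩ := ih (ℓ - 2) (by omega) hin (by omega)
      (by simp only [hin_end, add_zero]; exact hrec.1.symm)
      (by simp only [hin_last, add_zero]; exact hrec.2.symm)
    exact ⟨m, hm₁, by omega, hcyc⟩
  cases h0 : s 0
  · -- both ends are hyperedge steps: they join `p 1` and `p (ℓ - 1)` to the fiber of `p 0`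
    have h1 : s 1 = true := by
      by_contra h; exact hp.no_hyper_hyper 0 (by omega) ⟨h0, by simpa using h⟩
    have h2 : s (ℓ - 2) = true := by
      by_contra h
      refine hp.no_hyper_hyper (ℓ - 2) (by omega) ⟨by simpa using h, ?_⟩
      rw [show ℓ - 2 + 1 = ℓ - 1 by omega, hends, h0]
    have hfirst := (hp.step 0 (by omega)).2 h0
    have hlast := (hp.step (ℓ - 1) (by omega)).2 (hends.trans h0)
    rw [show ℓ - 1 + 1 = ℓ by omega, hclosed] at hlast
    have hadj : FiberAdj f (p (ℓ - 1)) (p 1) := ⟨fun h => hrec ⟨h.symm, h1.trans h2.symm⟩,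
      hlast.2.trans hfirst.2⟩
    obtain ⟨w, t, hc⟩ := hin.exists_isFiberCycle_of_fiberAdj (by omega) (by simpa using h1)
      (by simpa only [hin_last] using h2) (by simpa only [hin_end, add_zero] using hadj)
    exact ⟨ℓ - 2 + 1, by omega, by omega, w, t, hc⟩
  · by_cases hback : p 1 = p (ℓ - 1)
    · have hdiff : s (ℓ - 2) ≠ s 1 := fun h => hrec ⟨hback, h.symm⟩
      obtain ⟨w, t, hc⟩ := hin.exists_isFiberCycle_of_closed (by omega)
        (by simpa only [hin_end, add_zero] using hback.symm)
        (by simp only [hin_last, add_zero]; exact fun h => hdiff (h.1.trans h.2.symm))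
        (by simp only [hin_last, add_zero]; exact fun h => hdiff (h.1.trans h.2.1.symm))
      exact ⟨ℓ - 2, by omega, by omega, w, t, hc⟩
    · exact ⟨ℓ, hℓ, le_rfl, hp.exists_isFiberCycle_of_closed hℓ hclosed
        (fun h => nomatch h.2.symm.trans h0) (fun h => hback h.2.2)⟩

end IsFiberPath

lemma GirthAtLeast.le_length_succ {f : Fin n → Fin N} {γ ℓ : ℕ} {p : ℕ → Fin n} {s : ℕ → Bool}
    (hgirth : GirthAtLeast f γ) (hp : IsFiberPath f ℓ p s) (hℓ : 1 ≤ ℓ) (hfirst : s 0 = true)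
    (hlast : s (ℓ - 1) = true) (hsame : f (p 0) = f (p ℓ)) : γ ≤ ℓ + 1 := by
  by_cases hclosed : p ℓ = p 0
  · obtain ⟨m, -, hm, w, t, hc⟩ :=
      hp.exists_isFiberCycle_le_of_closed hℓ hclosed (hlast.trans hfirst.symm)
    have := hgirth m w t hc
    omega
  · obtain ⟨w, t, hc⟩ := hp.exists_isFiberCycle_of_fiberAdj hℓ hfirst hlast ⟨hclosed, hsame.symm⟩
    exact hgirth _ w t hc

namespace IsFiberCycle

variable {f : Fin n → Fin N} {L : ℕ} {w : ZMod L → Fin n} {t : ZMod L → Bool}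

lemma isFiberPath (hc : IsFiberCycle f L w t) (i : ZMod L) (ℓ : ℕ) :
    IsFiberPath f ℓ (fun j : ℕ => w (i + j)) (fun j : ℕ => t (i + j)) := by
  obtain ⟨-, hstep, hhyper, huturn⟩ := hc
  have h₁ (j : ℕ) : i + ((j + 1 : ℕ) : ZMod L) = i + j + 1 := by push_cast; ring
  have h₂ (x : ZMod L) : x + 1 + 1 = x + 2 := by ring
  exact ⟨fun j _ => by simpa only [h₁] using hstep (i + j),
    fun j _ => by simpa only [h₁] using hhyper (i + j),
    fun j _ => by simpa only [h₁, h₂] using huturn (i + j)⟩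

/-- At a vertex of maximal label, a cycle of line steps would have to turn back. -/
lemma exists_hyperStep (hc : IsFiberCycle f L w t) : ∃ i, t i = false := by
  have : NeZero L := ⟨hc.1.ne'⟩
  by_contra! hall
  simp only [ne_eq, Bool.not_eq_false] at hall
  obtain ⟨i, -, hmax⟩ := exists_max_image univ (fun i => (w i).val) univ_nonempty
  have hp := hc.isFiberPath (i - 1) 2
  have e₁ : i - 1 + ((0 + 1 : ℕ) : ZMod L) = i := by push_cast; ring
  have e₂ : i - 1 + ((1 + 1 : ℕ) : ZMod L) = i + 1 := by push_cast; ring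
  have hin := (hp.step 0 two_pos).1 (hall _)
  have hout := (hp.step 1 one_lt_two).1 (hall _)
  have hback := hp.no_uturn 0 le_rfl
  simp only [Nat.cast_zero, add_zero, e₁, e₂] at hin hout hback
  have := hmax (i - 1) (mem_univ _)
  have := hmax (i + 1) (mem_univ _)
  refine hback ⟨hall _, by simpa [e₁] using hall i, Fin.ext ?_⟩
  rcases hin with h | h <;> rcases hout with h' | h' <;> omega

end IsFiberCycle

lemma IsUniform.comp_equiv {f : Fin n → Fin N} (hf : IsUniform q f) (e : Fin n ≃ Fin n) :
    IsUniform q (f ∘ e) := by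
  intro j
  rw [← hf j, ← card_map e.toEmbedding]
  congr 1
  ext v
  simp

section Swap

variable {f : Fin n → Fin N} {y z : Fin n} {r γ : ℕ}

def IsSwapStep (y z : Fin n) (p : ℕ → Fin n) (s : ℕ → Bool) (j : ℕ) : Prop :=
  s j = false ∧ (p j = y ∨ p j = z ∨ p (j + 1) = y ∨ p (j + 1) = z)

lemma fiberAdj_of_fiberAdj_swap {a b : Fin n} (h : FiberAdj (f ∘ Equiv.swap y z) a b)
    (ha : ¬(a = y ∨ a = z)) (hb : ¬(b = y ∨ b = z)) : FiberAdj f a b := by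
  push Not at ha hb
  refine ⟨h.1, ?_⟩
  simpa [Equiv.swap_apply_of_ne_of_ne ha.1 ha.2, Equiv.swap_apply_of_ne_of_ne hb.1 hb.2]
    using h.2

lemma fiber_sides_of_fiberAdj_swap (hyz : f y ≠ f z) {a b : Fin n}
    (h : FiberAdj (f ∘ Equiv.swap y z) a b) (htouch : a = y ∨ a = z ∨ b = y ∨ b = z) :
    (f a = f y ∧ f b = f z) ∨ (f a = f z ∧ f b = f y) := by
  obtain ⟨hab, hf⟩ := h
  simp only [Function.comp_apply, Equiv.swap_apply_def] at hf
  split_ifs at hf <;> grind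

lemma IsFiberPath.of_swap {ℓ : ℕ} {p : ℕ → Fin n} {s : ℕ → Bool}
    (hp : IsFiberPath (f ∘ Equiv.swap y z) ℓ p s) (h : ∀ j < ℓ, ¬IsSwapStep y z p s j) :
    IsFiberPath f ℓ p s := by
  refine ⟨fun j hj => ⟨(hp.step j hj).1, fun hs => ?_⟩, hp.no_hyper_hyper, hp.no_uturn⟩
  have hns := h j hj
  simp only [IsSwapStep, hs, true_and, not_or] at hns
  exact fiberAdj_of_fiberAdj_swap ((hp.step j hj).2 hs) (by tauto) (by tauto)

def FarFibers (f : Fin n → Fin N) (r : ℕ) (y z : Fin n) : Prop :=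
  ∀ ℓ ≤ r, ∀ p s, IsFiberPath f ℓ p s → f (p 0) = f y → f (p ℓ) ≠ f z

lemma FarFibers.ne (h : FarFibers f r y z) : f y ≠ f z :=
  h 0 (Nat.zero_le r) (fun _ => y) (fun _ => true) ⟨by simp, by simp, by simp⟩ rfl

lemma gap_between_swapSteps (hfar : FarFibers f r y z) (hgirth : GirthAtLeast f γ)
    {p : ℕ → Fin n} {s : ℕ → Bool} {a b : ℕ}
    (hp : IsFiberPath (f ∘ Equiv.swap y z) (b + 1) p s) (hab : a < b) (hlen : b - a ≤ r + 1)
    (ha : IsSwapStep y z p s a) (hb : IsSwapStep y z p s b)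
    (hbetween : ∀ j, a < j → j < b → ¬IsSwapStep y z p s j) :
    γ ≤ b - a ∧ f (p (a + 1)) = f (p b) := by
  have hyz := hfar.ne
  have hab₂ : a + 2 ≤ b := by
    by_contra
    exact hp.no_hyper_hyper a (by omega) ⟨ha.1, by rw [show a + 1 = b by omega]; exact hb.1⟩
  set ℓ := b - a - 1
  have hend : a + 1 + ℓ = b := by omega
  have hseg : IsFiberPath f ℓ (fun j => p (a + 1 + j)) (fun j => s (a + 1 + j)) :=
    ((hp.mono_length (by omega : a + 1 + ℓ ≤ b + 1)).drop (a + 1)).of_swap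
      fun j hj => hbetween (a + 1 + j) (by omega) (by omega)
  have hfirst : s (a + 1) = true := by
    by_contra h; exact hp.no_hyper_hyper a (by omega) ⟨ha.1, by simpa using h⟩
  have hlast : s (a + 1 + (ℓ - 1)) = true := by
    rw [show a + 1 + (ℓ - 1) = b - 1 by omega]
    by_contra h
    exact hp.no_hyper_hyper (b - 1) (by omega)
      ⟨by simpa using h, by rw [show b - 1 + 1 = b by omega]; exact hb.1⟩
  have hsame : f (p (a + 1)) = f (p b) := by
    have hfwd := hfar ℓ (by omega) _ _ hseg
    have hbwd := hfar ℓ (by omega) _ _ hseg.reverse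
    simp only [add_zero, Nat.sub_zero, Nat.sub_self, hend] at hfwd hbwd
    rcases fiber_sides_of_fiberAdj_swap hyz ((hp.step a (by omega)).2 ha.1) ha.2 with
      ⟨-, h₁⟩ | ⟨-, h₁⟩ <;>
    rcases fiber_sides_of_fiberAdj_swap hyz ((hp.step b (by omega)).2 hb.1) hb.2 with
      ⟨h₂, -⟩ | ⟨h₂, -⟩
    · exact (hbwd h₂ h₁).elim
    · rw [h₁, h₂]
    · rw [h₁, h₂]
    · exact (hfwd h₁ h₂).elim
  have := hgirth.le_length_succ hseg (by omega) (by simpa using hfirst) hlast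
    (by simpa only [hend, add_zero] using hsame)
  exact ⟨by omega, hsame⟩

/-- Consecutive swap steps are at least `γ` apart, so a period of length at most `γ` holds only
one; but the ends of a swap step lie in different fibers, while the stretch after it returns to the
fiber it started from. -/
lemma not_isSwapStep_of_periodic (hfar : FarFibers f r y z) (hgirth : GirthAtLeast f γ)
    (hγ : γ ≤ r + 1) {L : ℕ} (hL : 0 < L) (hLγ : L ≤ γ)
    {p : ℕ → Fin n} {s : ℕ → Bool} (hp : ∀ ℓ, IsFiberPath (f ∘ Equiv.swap y z) ℓ p s)
    (hper : ∀ j, p (j + L) = p j) (hsper : ∀ j, s (j + L) = s j) :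
    ¬IsSwapStep y z p s 0 := by
  classical
  intro h₀
  have hyz := hfar.ne
  have hL' : IsSwapStep y z p s L := by
    simpa only [IsSwapStep, zero_add, ← hper 0, ← hsper 0, ← hper 1, add_comm 1 L] using h₀
  have hex₁ : ∃ b, 0 < b ∧ IsSwapStep y z p s b := ⟨L, hL, hL'⟩
  obtain ⟨hb₀, hb⟩ := Nat.find_spec hex₁
  set b := Nat.find hex₁
  have hbL : b ≤ L := Nat.find_min' hex₁ ⟨hL, hL'⟩
  obtain ⟨hγb, hfb⟩ := gap_between_swapSteps hfar hgirth (hp _) hb₀ (by omega) h₀ hb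
    fun j hj hjb hsw => Nat.find_min hex₁ hjb ⟨hj, hsw⟩
  rcases hbL.lt_or_eq with hbL | hbL
  · have hex₂ : ∃ c, b < c ∧ IsSwapStep y z p s c := ⟨L, hbL, hL'⟩
    obtain ⟨hc₀, hc⟩ := Nat.find_spec hex₂
    have hcL : Nat.find hex₂ ≤ L := Nat.find_min' hex₂ ⟨hbL, hL'⟩
    obtain ⟨hγc, -⟩ := gap_between_swapSteps hfar hgirth (hp _) hc₀ (by omega) hb hc
      fun j hj hjc hsw => Nat.find_min hex₂ hjc ⟨hj, hsw⟩
    omega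
  · rw [hbL, show p L = p 0 by simpa using hper 0, zero_add] at hfb
    rcases fiber_sides_of_fiberAdj_swap hyz (((hp 1).step 0 one_pos).2 h₀.1) h₀.2 with
      ⟨h₁, h₂⟩ | ⟨h₁, h₂⟩
    · exact hyz (h₁.symm.trans (hfb.symm.trans h₂))
    · exact hyz (h₂.symm.trans (hfb.trans h₁))

lemma IsFiberCycle.of_swap (hfar : FarFibers f r y z) (hgirth : GirthAtLeast f γ)
    (hγ : γ ≤ r + 1) {L : ℕ} {w : ZMod L → Fin n} {t : ZMod L → Bool}
    (hc : IsFiberCycle (f ∘ Equiv.swap y z) L w t) (hL : L ≤ γ) :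
    IsFiberCycle f L w t := by
  refine ⟨hc.1, fun i => ⟨(hc.2.1 i).1, fun hti => ?_⟩, hc.2.2.1, hc.2.2.2⟩
  have hper (j : ℕ) : i + ((j + L : ℕ) : ZMod L) = i + j := by simp
  have hnot := not_isSwapStep_of_periodic hfar hgirth hγ hc.1 hL (hc.isFiberPath i)
    (fun j => by simp only [hper]) (fun j => by simp only [hper])
  have := ((hc.isFiberPath i 1).of_swap fun j hj => by
    obtain rfl : j = 0 := by omega
    exact hnot).step 0 one_pos
  simpa using this.2 (by simpa using hti)

lemma IsFiberCycle.not_isFiberCycle_swap {L : ℕ} {w : ZMod L → Fin n} {t : ZMod L → Bool}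
    (hc : IsFiberCycle f L w t) {i : ZMod L} (hi : t i = false) (hz : f (w (i + 1)) ≠ f z) :
    ¬IsFiberCycle (f ∘ Equiv.swap (w (i + 1)) z) L w t := by
  intro hc'
  obtain ⟨hne, hf⟩ := (hc.2.1 i).2 hi
  have hwz : w i ≠ z := by rintro rfl; exact hz hf.symm
  have hf' := ((hc'.2.1 i).2 hi).2
  simp only [Function.comp_apply, Equiv.swap_apply_left,
    Equiv.swap_apply_of_ne_of_ne hne hwz] at hf'
  exact hz (hf.symm.trans hf')

end Swap

section Ball

variable {f : Fin n → Fin N}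

def upMoves (v : Fin n) : Finset (Fin n × Option Bool) :=
  ({u | v.val + 1 = u.val} : Finset (Fin n)).image fun u => (u, some true)

def downMoves (v : Fin n) : Finset (Fin n × Option Bool) :=
  ({u | u.val + 1 = v.val} : Finset (Fin n)).image fun u => (u, some false)

def fiberMoves (f : Fin n → Fin N) (v : Fin n) : Finset (Fin n × Option Bool) :=
  ((fiber f (f v)).erase v).image fun u => (u, none)

/-- A state `(v, d)` records how the walk entered `v`: `some true` by a step up the line,
`some false` by a step down, `none` through a hyperedge. -/
def nextStates (f : Fin n → Fin N) : Fin n × Option Bool → Finset (Fin n × Option Bool)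
  | (v, none) => upMoves v ∪ downMoves v
  | (v, some true) => upMoves v ∪ fiberMoves f v
  | (v, some false) => downMoves v ∪ fiberMoves f v

def statesAt (f : Fin n → Fin N) (Y : Finset (Fin n)) : ℕ → Finset (Fin n × Option Bool)
  | 0 => Y.biUnion fun v => upMoves v ∪ downMoves v ∪ fiberMoves f v
  | c + 1 => (statesAt f Y c).biUnion (nextStates f)

def ball (f : Fin n → Fin N) (Y : Finset (Fin n)) : ℕ → Finset (Fin n)
  | 0 => Y
  | r + 1 => ball f Y r ∪ (statesAt f Y r).image Prod.fst

def entry (p : ℕ → Fin n) (s : ℕ → Bool) (j : ℕ) : Option Bool :=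
  if s j = true then some (decide ((p j).val + 1 = (p (j + 1)).val)) else none

lemma mem_upMoves {v u : Fin n} (h : v.val + 1 = u.val) : (u, some true) ∈ upMoves v :=
  mem_image_of_mem _ (mem_filter.2 ⟨mem_univ _, h⟩)

lemma mem_downMoves {v u : Fin n} (h : u.val + 1 = v.val) : (u, some false) ∈ downMoves v :=
  mem_image_of_mem _ (mem_filter.2 ⟨mem_univ _, h⟩)

lemma mem_fiberMoves {v u : Fin n} (h : FiberAdj f v u) : (u, none) ∈ fiberMoves f v :=
  mem_image_of_mem _ (mem_erase.2 ⟨h.1.symm, mem_fiber.2 h.2.symm⟩)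

namespace IsFiberPath

variable {ℓ : ℕ} {p : ℕ → Fin n} {s : ℕ → Bool}

lemma step_cases (hp : IsFiberPath f ℓ p s) {j : ℕ} (hj : j < ℓ) :
    ((p j).val + 1 = (p (j + 1)).val ∧ s j = true ∧ entry p s j = some true)
    ∨ ((p (j + 1)).val + 1 = (p j).val ∧ s j = true ∧ entry p s j = some false)
    ∨ (FiberAdj f (p j) (p (j + 1)) ∧ s j = false ∧ entry p s j = none) := by
  cases hs : s j
  · exact Or.inr (Or.inr ⟨(hp.step j hj).2 hs, rfl, by simp [entry, hs]⟩)
  · rcases (hp.step j hj).1 hs with h | h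
    · exact Or.inl ⟨h, rfl, by simp [entry, hs, h]⟩
    · exact Or.inr (Or.inl ⟨h, rfl, by simp [entry, hs]; omega⟩)

lemma mem_nextStates (hp : IsFiberPath f ℓ p s) {j : ℕ} (hj : j + 1 < ℓ) :
    (p (j + 1 + 1), entry p s (j + 1)) ∈ nextStates f (p (j + 1), entry p s j) := by
  rcases hp.step_cases (j := j) (by omega) with
    ⟨h₁, hs₁, he₁⟩ | ⟨h₁, hs₁, he₁⟩ | ⟨-, hs₁, he₁⟩ <;>
  rcases hp.step_cases hj with ⟨h₂, hs₂, he₂⟩ | ⟨h₂, hs₂, he₂⟩ | ⟨h₂, hs₂, he₂⟩ <;>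
  rw [he₁, he₂] <;> simp only [nextStates]
  · exact mem_union_left _ (mem_upMoves h₂)
  · exact (hp.no_uturn j (by omega)
      ⟨hs₁, hs₂, Fin.ext (show (p (j + 1 + 1)).val = (p j).val by omega)⟩).elim
  · exact mem_union_right _ (mem_fiberMoves h₂)
  · exact (hp.no_uturn j (by omega)
      ⟨hs₁, hs₂, Fin.ext (show (p (j + 1 + 1)).val = (p j).val by omega)⟩).elim
  · exact mem_union_left _ (mem_downMoves h₂)
  · exact mem_union_right _ (mem_fiberMoves h₂)
  · exact mem_union_left _ (mem_upMoves h₂)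
  · exact mem_union_right _ (mem_downMoves h₂)
  · exact (hp.no_hyper_hyper j hj ⟨hs₁, hs₂⟩).elim

lemma mem_statesAt (hp : IsFiberPath f ℓ p s) {Y : Finset (Fin n)} (hY : p 0 ∈ Y) :
    ∀ j < ℓ, (p (j + 1), entry p s j) ∈ statesAt f Y j
  | 0, hj => by
    refine mem_biUnion.2 ⟨p 0, hY, ?_⟩
    rcases hp.step_cases hj with ⟨h, -, he⟩ | ⟨h, -, he⟩ | ⟨h, -, he⟩ <;> rw [he]
    · exact mem_union_left _ (mem_union_left _ (mem_upMoves h))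
    · exact mem_union_left _ (mem_union_right _ (mem_downMoves h))
    · exact mem_union_right _ (mem_fiberMoves h)
  | j + 1, hj => mem_biUnion.2 ⟨_, hp.mem_statesAt hY j (by omega), hp.mem_nextStates hj⟩

lemma mem_ball (hp : IsFiberPath f ℓ p s) {Y : Finset (Fin n)} (hY : p 0 ∈ Y) {r : ℕ}
    (hr : ℓ ≤ r) : p ℓ ∈ ball f Y r := by
  induction r with
  | zero => obtain rfl : ℓ = 0 := by omega
            exact hY
  | succ r ih =>
    rcases hr.lt_or_eq with hr | rfl
    · exact mem_union_left _ (ih (by omega))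
    · exact mem_union_right _ (mem_image_of_mem Prod.fst (hp.mem_statesAt hY r (by omega)))

end IsFiberPath

lemma card_upMoves_le (v : Fin n) : #(upMoves v) ≤ 1 :=
  card_image_le.trans <| card_le_one.2 fun a ha b hb => by
    rw [mem_filter] at ha hb; exact Fin.ext (by omega)

lemma card_downMoves_le (v : Fin n) : #(downMoves v) ≤ 1 :=
  card_image_le.trans <| card_le_one.2 fun a ha b hb => by
    rw [mem_filter] at ha hb; exact Fin.ext (by omega)

lemma card_fiberMoves_le (hf : IsUniform q f) (v : Fin n) : #(fiberMoves f v) ≤ q - 1 :=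
  card_image_le.trans (by rw [card_erase_of_mem (mem_fiber.2 rfl), hf])

lemma card_nextStates_le (hf : IsUniform q f) (hq : 2 ≤ q) (x : Fin n × Option Bool) :
    #(nextStates f x) ≤ q := by
  obtain ⟨v, d⟩ := x
  have := card_upMoves_le v
  have := card_downMoves_le v
  have := card_fiberMoves_le hf v
  rcases d with _ | _ | _ <;> refine (card_union_le _ _).trans ?_ <;> omega

lemma card_statesAt_le (hf : IsUniform q f) (hq : 2 ≤ q) (Y : Finset (Fin n)) :
    ∀ c, #(statesAt f Y c) ≤ #Y * (q + 1) * q ^ c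
  | 0 => by
    rw [pow_zero, mul_one]
    refine card_biUnion_le_card_mul _ _ _ fun v _ => ?_
    have := card_upMoves_le v
    have := card_downMoves_le v
    have := card_fiberMoves_le hf v
    have := card_union_le (upMoves v ∪ downMoves v) (fiberMoves f v)
    have := card_union_le (upMoves v) (downMoves v)
    omega
  | c + 1 => by
    refine (card_biUnion_le_card_mul _ _ q fun x _ => card_nextStates_le hf hq x).trans ?_
    rw [pow_succ, ← mul_assoc]
    exact Nat.mul_le_mul_right _ (card_statesAt_le hf hq Y c)

lemma card_ball_le (hf : IsUniform q f) (hq : 3 ≤ q) (Y : Finset (Fin n)) :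
    ∀ r, #(ball f Y r) ≤ #Y * (1 + 2 * q ^ r)
  | 0 => by simp only [ball, pow_zero]; omega
  | r + 1 => calc
    #(ball f Y (r + 1)) ≤ #Y * (1 + 2 * q ^ r) + #Y * (q + 1) * q ^ r :=
      (card_union_le _ _).trans
        (add_le_add (card_ball_le hf hq Y r)
          (card_image_le.trans (card_statesAt_le hf (by omega) Y r)))
    _ = #Y + #Y * ((q + 3) * q ^ r) := by ring
    _ ≤ #Y + #Y * ((2 * q) * q ^ r) := by gcongr; omega
    _ = #Y * (1 + 2 * q ^ (r + 1)) := by ring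

/-- Only `q (1 + 2 q^r)` vertices lie within distance `r` of the fiber of `y`, and their fibers
cover at most `q` times as many vertices. -/
lemma exists_far_from_fiber (hf : IsUniform q f) (hq : 3 ≤ q) {r : ℕ}
    (hn : q ^ 2 * (1 + 2 * q ^ r) < n) (y : Fin n) :
    ∃ z, FarFibers f r y z := by
  set Y := fiber f (f y)
  have hcard : #((ball f Y r).biUnion fun v => fiber f (f v)) < #(univ : Finset (Fin n)) := calc
    _ ≤ #(ball f Y r) * q := card_biUnion_le_card_mul _ _ _ fun v _ => (hf (f v)).le
    _ ≤ q * (1 + 2 * q ^ r) * q := by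
      gcongr
      exact (card_ball_le hf hq Y r).trans_eq (by rw [show #Y = q from hf (f y)])
    _ < _ := by rw [card_univ, Fintype.card_fin]; linarith
  obtain ⟨z, -, hz⟩ := exists_mem_notMem_of_card_lt_card hcard
  exact ⟨z, fun ℓ hℓ p s hp hp₀ hpz => hz (mem_biUnion.2 ⟨p ℓ, hp.mem_ball (mem_fiber.2 hp₀) hℓ,
    mem_fiber.2 hpz.symm⟩)⟩

end Ball

section Girth

variable {f : Fin n → Fin N} {r γ : ℕ}

lemma exists_swap_breaking_cycle (hf : IsUniform q f) (hq : 3 ≤ q)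
    (hn : q ^ 2 * (1 + 2 * q ^ r) < n) (hgirth : GirthAtLeast f γ) (hγ : γ ≤ r + 1)
    {w : ZMod γ → Fin n} {t : ZMod γ → Bool} (hc : IsFiberCycle f γ w t) :
    ∃ f' : Fin n → Fin N, IsUniform q f'
      ∧ (∀ L ≤ γ, ∀ w' t', IsFiberCycle f' L w' t' → IsFiberCycle f L w' t')
      ∧ ¬IsFiberCycle f' γ w t := by
  obtain ⟨i, hi⟩ := hc.exists_hyperStep
  obtain ⟨z, hfar⟩ := exists_far_from_fiber hf hq hn (w (i + 1))
  exact ⟨f ∘ Equiv.swap (w (i + 1)) z, hf.comp_equiv _,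
    fun L hL w' t' hc' => hc'.of_swap hfar hgirth hγ hL, hc.not_isFiberCycle_swap hi hfar.ne⟩

noncomputable def cycleCount (f : Fin n → Fin N) (L : ℕ) : ℕ :=
  {c : (ZMod L → Fin n) × (ZMod L → Bool) | IsFiberCycle f L c.1 c.2}.ncard

lemma cycleCount_lt {f' : Fin n → Fin N} {L : ℕ} {w : ZMod L → Fin n} {t : ZMod L → Bool}
    (hsub : ∀ w t, IsFiberCycle f' L w t → IsFiberCycle f L w t) (hc : IsFiberCycle f L w t)
    (hnot : ¬IsFiberCycle f' L w t) : cycleCount f' L < cycleCount f L := by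
  have : NeZero L := ⟨hc.1.ne'⟩
  exact Set.ncard_lt_ncard ⟨fun c hc' => hsub _ _ hc', fun hsup => hnot (@hsup (w, t) hc)⟩

/-- Erdős–Sachs: a uniform fiber map of girth at least `γ` with fewest cycles of length `γ` has
none, since otherwise `exists_swap_breaking_cycle` would produce one with fewer. -/
lemma exists_isUniform_girthAtLeast_succ (hq : 3 ≤ q) (hn : q ^ 2 * (1 + 2 * q ^ r) < n)
    (hγ : γ ≤ r + 1) (h : ∃ f : Fin n → Fin N, IsUniform q f ∧ GirthAtLeast f γ) :
    ∃ f : Fin n → Fin N, IsUniform q f ∧ GirthAtLeast f (γ + 1) := by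
  classical
  obtain ⟨f, hf, hmin⟩ := exists_min_image
    ({f | IsUniform q f ∧ GirthAtLeast f γ} : Finset (Fin n → Fin N)) (cycleCount · γ)
    (by simpa [Finset.Nonempty] using h)
  rw [mem_filter_univ] at hf
  refine ⟨f, hf.1, fun L w t hc => ?_⟩
  by_contra hL
  obtain rfl : L = γ := le_antisymm (by omega) (hf.2 L w t hc)
  obtain ⟨f', hf', hsub, hnot⟩ := exists_swap_breaking_cycle hf.1 hq hn hf.2 hγ hc
  have hgirth' : GirthAtLeast f' L := fun m w' t' hc' => by
    by_contra hm
    exact hm (hf.2 m w' t' (hsub m (by omega) w' t' hc'))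
  exact (hmin f' (by simp [hf', hgirth'])).not_gt (cycleCount_lt (hsub L le_rfl) hc hnot)

lemma exists_isUniform_girthAtLeast (hq : 3 ≤ q) (hn : q ^ 2 * (1 + 2 * q ^ r) < n)
    (h₀ : ∃ f : Fin n → Fin N, IsUniform q f) :
    ∀ γ ≤ r + 2, ∃ f : Fin n → Fin N, IsUniform q f ∧ GirthAtLeast f γ
  | 0, _ => h₀.imp fun _ hf => ⟨hf, fun _ _ _ _ => Nat.zero_le _⟩
  | γ + 1, hγ => exists_isUniform_girthAtLeast_succ hq hn (by omega)
      (exists_isUniform_girthAtLeast hq hn h₀ γ (by omega))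

end Girth

lemma sq_mul_lt_pow {q g : ℕ} (hq : 3 ≤ q) (hg : 3 ≤ g) :
    q ^ 2 * (1 + 2 * q ^ (g - 2)) < q ^ (g + 1) := by
  obtain ⟨k, rfl⟩ : ∃ k, g = k + 3 := ⟨g - 3, by omega⟩
  have hX : 3 ≤ q ^ (k + 1) := hq.trans (Nat.le_self_pow (by omega) q)
  rw [show k + 3 - 2 = k + 1 by omega, show k + 3 + 1 = k + 1 + 3 by omega, pow_add q (k + 1) 3]
  calc q ^ 2 * (1 + 2 * q ^ (k + 1)) < q ^ 2 * (3 * q ^ (k + 1)) := by gcongr; omega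
    _ ≤ q ^ 2 * (q * q ^ (k + 1)) := by gcongr
    _ = q ^ (k + 1) * q ^ 3 := by ring

end Interleaver

open Interleaver in
/-- High-girth interleaver existence (Theorem 2): for q ≥ 3, g ≥ 3 and
n = q^{g+1} (so n ≥ q⁴), there is a set of n/q = q^g hyperedges, each of q
vertices, partitioning the vertices of the Hamiltonian line on n vertices, such
that every cycle of the resulting hypergraph has length at least g. -/
theorem stmt12 (q g : ℕ) (hq : 3 ≤ q) (hg : 3 ≤ g) :
    ∃ A : Finset (Finset (Fin (q ^ (g + 1)))),
      (∀ e ∈ A, e.card = q)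
      ∧ (∀ v : Fin (q ^ (g + 1)), ∃! e, e ∈ A ∧ v ∈ e)
      ∧ A.card = q ^ g
      ∧ (∀ (L : ℕ) (w : ZMod L → Fin (q ^ (g + 1))) (t : ZMod L → Bool),
          IsCycleWalk A L w t → g ≤ L) := by
  obtain ⟨f, hf, hgirth⟩ := exists_isUniform_girthAtLeast (r := g - 2) hq (sq_mul_lt_pow hq hg)
    (exists_isUniform (N := q ^ g) (pow_succ' q g)) g (by omega)
  exact ⟨fiberEdges f, fun e he => card_of_mem_fiberEdges hf he, existsUnique_mem_fiberEdges f,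
    card_fiberEdges hf (by omega),
    fun L w t hc => hgirth L w t ((isCycleWalk_fiberEdges_iff f L w t).1 hc)⟩
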